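/- Let (a,b) be a fictitious-play trajectory. Suppose β_t is not an integer for some round t, and let τ > t be the first round after t such that β_t·β_τ ≤ 0 (i.e. β_τ is zero or has the opposite sign of β_t). Then ρ_τ ≥ ⌊ρ_t⌋ + 1. -/

import Mathlib

open MeasureTheory

/-- Bob's choice of the left or right piece. -/
inductive Choice
  | L
  | R
deriving DecidableEq

/-- The cumulative valuation `V(x) = ∫_0^x v`. -/
noncomputable def cumul (v : ℝ → ℝ) (x : ℝ) : ℝ := ∫ y in (0:ℝ)..x, v y

/-- `v` is an integrable value density on `[0,1]`, bounded between `lo` and `hi`,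
integrating to `1`. -/
def IsDensity (lo hi : ℝ) (v : ℝ → ℝ) : Prop :=
  IntervalIntegrable v volume 0 1 ∧
  (∀ x ∈ Set.Icc (0:ℝ) 1, lo ≤ v x ∧ v x ≤ hi) ∧
  (∫ y in (0:ℝ)..1, v y) = 1

/-- Alice's round-`t` utility: if Bob picks `L` she gets `[a_t,1]`, else `[0,a_t]`. -/
noncomputable def uA (vA : ℝ → ℝ) (a : ℕ → ℝ) (b : ℕ → Choice) (t : ℕ) : ℝ :=
  if b t = Choice.L then 1 - cumul vA (a t) else cumul vA (a t)

/-- Bob's round-`t` utility: if he picks `L` he gets `[0,a_t]`, else `[a_t,1]`. -/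
noncomputable def uB (vB : ℝ → ℝ) (a : ℕ → ℝ) (b : ℕ → Choice) (t : ℕ) : ℝ :=
  if b t = Choice.L then cumul vB (a t) else 1 - cumul vB (a t)

/-- `α_t = r_t − ℓ_t`: number of `R` choices minus number of `L` choices up to round `t`. -/
noncomputable def alphaFP (b : ℕ → Choice) (t : ℕ) : ℝ :=
  ∑ i ∈ Finset.Icc 1 t, (if b i = Choice.R then (1:ℝ) else -1)

/-- `β_t = Σ_{i=1}^t (2 V_B(a_i) − 1)`. -/
noncomputable def betaFP (vB : ℝ → ℝ) (a : ℕ → ℝ) (t : ℕ) : ℝ :=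
  ∑ i ∈ Finset.Icc 1 t, (2 * cumul vB (a i) - 1)

/-- The radius `ρ_t = |α_t| + |β_t|`. -/
noncomputable def rhoFP (vB : ℝ → ℝ) (a : ℕ → ℝ) (b : ℕ → Choice) (t : ℕ) : ℝ :=
  |alphaFP b t| + |betaFP vB a t|

/-- `(a,b)` is a fictitious-play trajectory. -/
def IsFictitiousPlay (vB : ℝ → ℝ) (a : ℕ → ℝ) (b : ℕ → Choice) : Prop :=
  ∀ t : ℕ,
    (0 < alphaFP b t → a (t+1) = 1) ∧
    (alphaFP b t < 0 → a (t+1) = 0) ∧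
    (0 < betaFP vB a t → b (t+1) = Choice.L) ∧
    (betaFP vB a t < 0 → b (t+1) = Choice.R)

/-- Round `t` is axis-crossing. -/
def AxisCrossing (vB : ℝ → ℝ) (a : ℕ → ℝ) (b : ℕ → Choice) (t : ℕ) : Prop :=
  alphaFP b t = 0 ∨
  (betaFP vB a t ≤ 0 ∧ 0 < betaFP vB a (t+1)) ∨
  (0 ≤ betaFP vB a t ∧ betaFP vB a (t+1) < 0)

/-!
Let `ε = ±1` be the sign of `β_t`. As long as `εβ` stays positive Bob keeps choosing the same
side, so `εα` drops by one every round, and the potential `|α| + εβ` never decreases: while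
`εα > 0` Alice cuts at an end of the cake, so `εβ` rises by exactly one as `|α|` drops by one;
otherwise `|α|` rises by one while `εβ` drops by at most one, since `0 ≤ V_B ≤ 1`. At `τ` we
have `εβ_τ = -|β_τ|`, so `ρ_t ≤ |α_τ| - |β_τ|`. Here `|α_τ|` is an integer while `ρ_t` is not
(`α_t` is an integer and `β_t` is not), whence `⌊ρ_t⌋ + 1 ≤ |α_τ| ≤ ρ_τ`.
-/

lemma alphaFP_succ (b : ℕ → Choice) (s : ℕ) :
    alphaFP b (s + 1) = alphaFP b s + if b (s + 1) = Choice.R then 1 else -1 :=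
  Finset.sum_Icc_succ_top (by omega) _

lemma betaFP_succ (vB : ℝ → ℝ) (a : ℕ → ℝ) (s : ℕ) :
    betaFP vB a (s + 1) = betaFP vB a s + (2 * cumul vB (a (s + 1)) - 1) :=
  Finset.sum_Icc_succ_top (by omega) _

lemma exists_alphaFP_eq_intCast (b : ℕ → Choice) (t : ℕ) : ∃ k : ℤ, alphaFP b t = k := by
  induction t with
  | zero => exact ⟨0, by simp [alphaFP]⟩
  | succ s ih =>
    obtain ⟨k, hk⟩ := ih
    rw [alphaFP_succ, hk]
    split_ifs
    exacts [⟨k + 1, by push_cast; ring⟩, ⟨k - 1, by push_cast; ring⟩]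

lemma cumul_mem_Icc {lo hi : ℝ} {v : ℝ → ℝ} (hlo : 0 ≤ lo) (hv : IsDensity lo hi v)
    {x : ℝ} (hx : x ∈ Set.Icc (0 : ℝ) 1) : cumul v x ∈ Set.Icc (0 : ℝ) 1 := by
  obtain ⟨hint, hbd, hone⟩ := hv
  have hnonneg : ∀ y ∈ Set.Icc (0 : ℝ) 1, 0 ≤ v y := fun y hy => hlo.trans (hbd y hy).1
  have hint_x : IntervalIntegrable v volume 0 x :=
    hint.mono_set (Set.uIcc_subset_uIcc_left (by rwa [Set.uIcc_of_le zero_le_one]))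
  have hrest : 1 - cumul v x = ∫ y in x..1, v y := by
    rw [cumul, ← intervalIntegral.integral_interval_sub_left hint hint_x, hone]
  constructor
  · exact intervalIntegral.integral_nonneg hx.1 fun y hy => hnonneg y ⟨hy.1, hy.2.trans hx.2⟩
  · rw [← sub_nonneg, hrest]
    exact intervalIntegral.integral_nonneg hx.2 fun y hy => hnonneg y ⟨hx.1.trans hy.1, hy.2⟩

section Trajectory

variable {vB : ℝ → ℝ} {a : ℕ → ℝ} {b : ℕ → Choice} {s : ℕ}

lemma IsFictitiousPlay.alphaFP_succ_of_betaFP_pos (hfp : IsFictitiousPlay vB a b)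
    (hβ : 0 < betaFP vB a s) : alphaFP b (s + 1) = alphaFP b s - 1 := by
  rw [alphaFP_succ, (hfp s).2.2.1 hβ]
  simp [sub_eq_add_neg]

lemma IsFictitiousPlay.alphaFP_succ_of_betaFP_neg (hfp : IsFictitiousPlay vB a b)
    (hβ : betaFP vB a s < 0) : alphaFP b (s + 1) = alphaFP b s + 1 := by
  rw [alphaFP_succ, (hfp s).2.2.2 hβ, if_pos rfl]

lemma IsFictitiousPlay.betaFP_succ_of_alphaFP_pos (hone : ∫ y in (0 : ℝ)..1, vB y = 1)
    (hfp : IsFictitiousPlay vB a b) (hα : 0 < alphaFP b s) :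
    betaFP vB a (s + 1) = betaFP vB a s + 1 := by
  rw [betaFP_succ, (hfp s).1 hα, cumul, hone]
  ring

lemma IsFictitiousPlay.betaFP_succ_of_alphaFP_neg (hfp : IsFictitiousPlay vB a b)
    (hα : alphaFP b s < 0) : betaFP vB a (s + 1) = betaFP vB a s - 1 := by
  rw [betaFP_succ, (hfp s).2.1 hα, cumul, intervalIntegral.integral_same]
  ring

lemma abs_betaFP_succ_sub_le {lo hi : ℝ} (hlo : 0 ≤ lo) (hB : IsDensity lo hi vB)
    (ha : a (s + 1) ∈ Set.Icc (0 : ℝ) 1) : |betaFP vB a (s + 1) - betaFP vB a s| ≤ 1 := by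
  have hV := cumul_mem_Icc hlo hB ha
  rw [betaFP_succ, add_sub_cancel_left, abs_le]
  constructor <;> linarith [hV.1, hV.2]

end Trajectory

lemma abs_intCast_add_le_abs_sub_one_add (k : ℤ) {y y' : ℝ} (hy : y - 1 ≤ y')
    (hk : 0 < k → y' = y + 1) : |(k : ℝ)| + y ≤ |(k : ℝ) - 1| + y' := by
  rcases le_or_gt k 0 with hk0 | hk0
  · have hk0' : (k : ℝ) ≤ 0 := by exact_mod_cast hk0
    rw [abs_of_nonpos hk0', abs_of_nonpos (by linarith)]
    linarith
  · have hk1 : (1 : ℝ) ≤ k := by exact_mod_cast hk0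
    rw [abs_of_pos (by linarith), abs_of_nonneg (by linarith), hk hk0]
    linarith

section Potential

variable {lo hi : ℝ} {vB : ℝ → ℝ} {a : ℕ → ℝ} {b : ℕ → Choice} {ε : ℝ}

lemma IsFictitiousPlay.abs_alphaFP_add_mul_betaFP_le_succ (hlo : 0 ≤ lo)
    (hB : IsDensity lo hi vB) (hfp : IsFictitiousPlay vB a b) {s : ℕ}
    (ha : a (s + 1) ∈ Set.Icc (0 : ℝ) 1) (hε : ε = 1 ∨ ε = -1) (hβ : 0 < ε * betaFP vB a s) :
    |alphaFP b s| + ε * betaFP vB a s ≤ |alphaFP b (s + 1)| + ε * betaFP vB a (s + 1) := by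
  obtain ⟨k, hk⟩ := exists_alphaFP_eq_intCast b s
  obtain ⟨hdown, hup⟩ := abs_le.1 (abs_betaFP_succ_sub_le hlo hB ha)
  rcases hε with rfl | rfl
  · rw [one_mul] at hβ
    rw [hfp.alphaFP_succ_of_betaFP_pos hβ, hk, one_mul, one_mul]
    refine abs_intCast_add_le_abs_sub_one_add k (by linarith) fun hk0 => ?_
    exact hfp.betaFP_succ_of_alphaFP_pos hB.2.2 (by rw [hk]; exact_mod_cast hk0)
  · have hβ' : betaFP vB a s < 0 := by linarith
    have key := abs_intCast_add_le_abs_sub_one_add (-k) (y := -betaFP vB a s)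
      (y' := -betaFP vB a (s + 1)) (by linarith) fun hk0 => by
        rw [hfp.betaFP_succ_of_alphaFP_neg (by rw [hk]; exact_mod_cast neg_pos.1 hk0)]
        ring
    rw [hfp.alphaFP_succ_of_betaFP_neg hβ', hk]
    push_cast at key
    rw [abs_neg, show -(k : ℝ) - 1 = -(k + 1) by ring, abs_neg] at key
    linarith

lemma IsFictitiousPlay.abs_alphaFP_add_mul_betaFP_le (hlo : 0 ≤ lo) (hB : IsDensity lo hi vB)
    (hfp : IsFictitiousPlay vB a b) (ha : ∀ t : ℕ, 1 ≤ t → a t ∈ Set.Icc (0 : ℝ) 1)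
    (hε : ε = 1 ∨ ε = -1) {t τ : ℕ} (htτ : t ≤ τ)
    (hβ : ∀ s : ℕ, t ≤ s → s < τ → 0 < ε * betaFP vB a s) :
    |alphaFP b t| + ε * betaFP vB a t ≤ |alphaFP b τ| + ε * betaFP vB a τ := by
  induction τ, htτ using Nat.le_induction with
  | base => rfl
  | succ n htn ih =>
    exact (ih fun s hts hsn => hβ s hts (by omega)).trans
      (hfp.abs_alphaFP_add_mul_betaFP_le_succ hlo hB (ha (n + 1) (by omega)) hε
        (hβ n htn (by omega)))

end Potential

lemma IsFictitiousPlay.rhoFP_le_abs_alphaFP_sub_abs_betaFP {lo hi : ℝ} {vB : ℝ → ℝ}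
    {a : ℕ → ℝ} {b : ℕ → Choice} (hlo : 0 ≤ lo) (hB : IsDensity lo hi vB)
    (hfp : IsFictitiousPlay vB a b) (ha : ∀ t : ℕ, 1 ≤ t → a t ∈ Set.Icc (0 : ℝ) 1)
    {t τ : ℕ} (htτ : t ≤ τ) (hβ : betaFP vB a t ≠ 0)
    (hsign : betaFP vB a t * betaFP vB a τ ≤ 0)
    (hfirst : ∀ s : ℕ, t < s → s < τ → 0 < betaFP vB a t * betaFP vB a s) :
    rhoFP vB a b t ≤ |alphaFP b τ| - |betaFP vB a τ| := by
  obtain ⟨ε, hε, hεt⟩ : ∃ ε : ℝ, (ε = 1 ∨ ε = -1) ∧ 0 < ε * betaFP vB a t := by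
    rcases hβ.lt_or_gt with h | h
    exacts [⟨-1, .inr rfl, by linarith⟩, ⟨1, .inl rfl, by linarith⟩]
  have hεε : ε * ε = 1 := by rcases hε with rfl | rfl <;> norm_num
  have hprod : ∀ s, betaFP vB a t * betaFP vB a s = (ε * betaFP vB a t) * (ε * betaFP vB a s) :=
    fun s => by rw [mul_mul_mul_comm, hεε, one_mul]
  have habs : ∀ s, |betaFP vB a s| = |ε * betaFP vB a s| := fun s => by
    rw [abs_mul, abs_eq_abs.2 hε, abs_one, one_mul]
  have hpos : ∀ s : ℕ, t ≤ s → s < τ → 0 < ε * betaFP vB a s := by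
    intro s hts hsτ
    rcases hts.eq_or_lt with rfl | hts
    · exact hεt
    · exact pos_of_mul_pos_right (hprod s ▸ hfirst s hts hsτ) hεt.le
  have hτ : ε * betaFP vB a τ ≤ 0 := nonpos_of_mul_nonpos_right (hprod τ ▸ hsign) hεt
  calc rhoFP vB a b t = |alphaFP b t| + ε * betaFP vB a t := by
        rw [rhoFP, habs t, abs_of_pos hεt]
    _ ≤ |alphaFP b τ| + ε * betaFP vB a τ :=
        hfp.abs_alphaFP_add_mul_betaFP_le hlo hB ha hε htτ hpos
    _ = |alphaFP b τ| - |betaFP vB a τ| := by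
        rw [habs τ, abs_of_nonpos hτ, sub_neg_eq_add]

lemma rhoFP_ne_intCast {vB : ℝ → ℝ} {a : ℕ → ℝ} (b : ℕ → Choice) {t : ℕ}
    (hβ : ¬ ∃ k : ℤ, betaFP vB a t = k) (m : ℤ) : rhoFP vB a b t ≠ m := by
  obtain ⟨k, hk⟩ := exists_alphaFP_eq_intCast b t
  intro hρ
  rw [rhoFP, hk] at hρ
  rcases abs_choice (betaFP vB a t) with h | h
  · exact hβ ⟨m - |k|, by push_cast; linarith⟩
  · exact hβ ⟨|k| - m, by push_cast; linarith⟩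

theorem fractional_beta_increases_radius_general
    (δ Δ : ℝ) (hδ : 0 < δ)
    (vB : ℝ → ℝ) (hB : IsDensity δ Δ vB)
    (a : ℕ → ℝ) (b : ℕ → Choice)
    (ha : ∀ t : ℕ, 1 ≤ t → a t ∈ Set.Icc (0:ℝ) 1)
    (hfp : IsFictitiousPlay vB a b)
    (t τ : ℕ)
    (hβ : ¬ ∃ k : ℤ, betaFP vB a t = (k : ℝ))
    (hτgt : t < τ)
    (hsign : betaFP vB a t * betaFP vB a τ ≤ 0)
    (hfirst : ∀ s : ℕ, t < s → s < τ → 0 < betaFP vB a t * betaFP vB a s) :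
    (⌊rhoFP vB a b t⌋ : ℝ) + 1 ≤ rhoFP vB a b τ := by
  have hβ0 : betaFP vB a t ≠ 0 := fun h => hβ ⟨0, by simp [h]⟩
  have hkey := hfp.rhoFP_le_abs_alphaFP_sub_abs_betaFP hδ.le hB ha hτgt.le hβ0 hsign hfirst
  obtain ⟨k, hk⟩ := exists_alphaFP_eq_intCast b τ
  rw [hk, ← Int.cast_abs] at hkey
  have hlt : rhoFP vB a b t < |k| :=
    (hkey.trans (sub_le_self _ (abs_nonneg _))).lt_of_ne (rhoFP_ne_intCast b hβ |k|)
  calc (⌊rhoFP vB a b t⌋ : ℝ) + 1 ≤ |k| := by exact_mod_cast Int.floor_lt.2 hlt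
    _ ≤ rhoFP vB a b τ := by
        rw [rhoFP, hk, ← Int.cast_abs]
        exact le_add_of_nonneg_right (abs_nonneg _)

/-- If `β_t` is not an integer and `τ > t` is the first round after `t`
with `β_t·β_τ ≤ 0`, then `ρ_τ ≥ ⌊ρ_t⌋ + 1`. -/
theorem fractional_beta_increases_radius
    (δ Δ : ℝ) (hδ : 0 < δ) (hδΔ : δ ≤ Δ)
    (vA vB : ℝ → ℝ) (hA : IsDensity δ Δ vA) (hB : IsDensity δ Δ vB)
    (a : ℕ → ℝ) (b : ℕ → Choice)
    (ha : ∀ t : ℕ, 1 ≤ t → a t ∈ Set.Icc (0:ℝ) 1)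
    (hfp : IsFictitiousPlay vB a b)
    (t τ : ℕ)
    (hβ : ¬ ∃ k : ℤ, betaFP vB a t = (k : ℝ))
    (hτgt : t < τ)
    (hsign : betaFP vB a t * betaFP vB a τ ≤ 0)
    (hfirst : ∀ s : ℕ, t < s → s < τ → 0 < betaFP vB a t * betaFP vB a s) :
    (⌊rhoFP vB a b t⌋ : ℝ) + 1 ≤ rhoFP vB a b τ :=
  fractional_beta_increases_radius_general δ Δ hδ vB hB a b ha hfp t τ hβ hτgt hsign hfirst
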